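/- arXiv:2601.14122 — 12 statements merged into one kernel-verified Lean document; each statement's English description precedes it below -/
import Mathlib

section
/- For every odd prime p ≥ 7 and any units x_1, x_2, x_3 of Z_p, the set x_1·Q_p + x_2·Q_p + x_3·Q_p equals Z_p, where Q_p is the set of nonzero quadratic residues mod p. -/
open Pointwise


def Qp (p : ℕ) : Set (ZMod p) := {x | ∃ u : (ZMod p)ˣ, (u : ZMod p) ^ 2 = x}

def Np (p : ℕ) : Set (ZMod p) := {x | IsUnit x ∧ x ∉ Qp p}

theorem stmt_1 (p : ℕ) [Fact p.Prime] (hp : 7 ≤ p) (x₁ x₂ x₃ : (ZMod p)ˣ) :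
    {z : ZMod p | ∃ a ∈ Qp p, ∃ b ∈ Qp p, ∃ c ∈ Qp p,
      z = (x₁ : ZMod p) * a + (x₂ : ZMod p) * b + (x₃ : ZMod p) * c} = Set.univ := by
  have hprime : p.Prime := Fact.out
  classical
  -- the finset of nonzero quadratic residues
  set Q : Finset (ZMod p) :=
    Finset.image (fun u : (ZMod p)ˣ => (u : ZMod p) ^ 2) Finset.univ with hQ
  have hmemQ : ∀ x : ZMod p, x ∈ Q ↔ x ∈ Qp p := by
    intro x
    simp [hQ, Qp, Finset.mem_image]
  -- fibers of squaring have at most 2 elements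
  have hcard_units : Fintype.card (ZMod p)ˣ = p - 1 := ZMod.card_units_eq_totient p ▸
    (Nat.totient_prime hprime)
  have hQcard : p - 1 ≤ 2 * Q.card := by
    have := Finset.card_le_mul_card_image (f := fun u : (ZMod p)ˣ => (u : ZMod p) ^ 2)
      Finset.univ 2 ?_
    · simpa [hcard_units] using this
    · intro b _
      rcases Finset.eq_empty_or_nonempty
        (Finset.univ.filter fun u : (ZMod p)ˣ => (u : ZMod p) ^ 2 = b) with h | ⟨u₀, hu₀⟩
      · simp [h]
      · have hsub : (Finset.univ.filter fun u : (ZMod p)ˣ => (u : ZMod p) ^ 2 = b)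
            ⊆ {u₀, -u₀} := by
          intro v hv
          simp only [Finset.mem_filter, Finset.mem_univ, true_and] at hv hu₀
          have h2 : (v : ZMod p) ^ 2 = (u₀ : ZMod p) ^ 2 := hv.trans hu₀.symm
          rcases (Commute.all (v : ZMod p) (u₀ : ZMod p)).sq_eq_sq_iff_eq_or_eq_neg.mp h2
            with h | h
          · simp [Units.ext h]
          · have : v = -u₀ := Units.ext (by simpa using h)
            simp [this]
        calc (Finset.univ.filter fun u : (ZMod p)ˣ => (u : ZMod p) ^ 2 = b).card
            ≤ ({u₀, -u₀} : Finset (ZMod p)ˣ).card := Finset.card_le_card hsub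
          _ ≤ 2 := Finset.card_insert_le _ _ |>.trans (by simp)
  have hQne : Q.Nonempty := ⟨(1 : ZMod p) ^ 2, Finset.mem_image.mpr ⟨1, Finset.mem_univ _, by
    norm_num⟩⟩
  -- the scaled copies
  have hscale : ∀ x : (ZMod p)ˣ,
      (Finset.image (fun a => (x : ZMod p) * a) Q).card = Q.card := fun x =>
    Finset.card_image_of_injective _ (fun a b h => by
      have := mul_left_cancel₀ (a := (x : ZMod p)) x.ne_zero h; exact this)
  set A := Finset.image (fun a => (x₁ : ZMod p) * a) Q with hA
  set B := Finset.image (fun a => (x₂ : ZMod p) * a) Q with hB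
  set C := Finset.image (fun a => (x₃ : ZMod p) * a) Q with hC
  have hAne : A.Nonempty := hQne.image _
  have hBne : B.Nonempty := hQne.image _
  have hCne : C.Nonempty := hQne.image _
  have h1 := ZMod.cauchy_davenport hprime hAne hBne
  have h2 := ZMod.cauchy_davenport hprime (hAne.add hBne) hCne
  have hcards : p ≤ (A + B + C).card := by
    rw [hA, hB, hC] at *
    rw [hscale x₁, hscale x₂] at h1
    rw [hscale x₃] at h2
    omega
  have huniv : A + B + C = Finset.univ := by
    apply Finset.eq_univ_of_card
    have hle : (A + B + C).card ≤ Fintype.card (ZMod p) := Finset.card_le_univ _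
    have : Fintype.card (ZMod p) = p := ZMod.card p
    omega
  ext z
  simp only [Set.mem_setOf_eq, Set.mem_univ, iff_true]
  have hz : z ∈ A + B + C := huniv ▸ Finset.mem_univ z
  rw [Finset.mem_add] at hz
  obtain ⟨y, hy, c, hc, hzc⟩ := hz
  rw [Finset.mem_add] at hy
  obtain ⟨a, ha, b, hb, hyab⟩ := hy
  rw [hA, Finset.mem_image] at ha
  rw [hB, Finset.mem_image] at hb
  rw [hC, Finset.mem_image] at hc
  obtain ⟨a', ha', rfl⟩ := ha
  obtain ⟨b', hb', rfl⟩ := hb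
  obtain ⟨c', hc', rfl⟩ := hc
  exact ⟨a', (hmemQ a').mp ha', b', (hmemQ b').mp hb', c', (hmemQ c').mp hc', by
    rw [← hzc, ← hyab]⟩
end

section
/- Let p ≥ 7 be a prime and let (x_1,...,x_k) be a sequence in Z_p with at least three nonzero terms. Then there exist c_1,...,c_k ∈ Q_p such that c_1x_1 + ... + c_kx_k = 0. -/
/-!
The nonzero squares form a set `Q` of `(p - 1) / 2` residues. For nonzero `a, b, c` the dilates
`Q a, Q b, Q c` have sizes adding up to `3 (p - 1) / 2 ≥ p + 2` once `p ≥ 7`, so by Cauchy–Davenport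
`Q a + Q b + Q c` is all of `ZMod p`. Three nonzero terms can therefore absorb minus the sum of all
the other terms, which are given weight `1`.
-/

open Finset Pointwise

lemma card_units_le_two_mul_card_image_sq (F : Type*) [Field F] [Fintype F] [DecidableEq F] :
    Fintype.card Fˣ ≤ 2 * #(univ.image fun u : Fˣ => (u : F) ^ 2) := by
  refine Finset.card_le_mul_card_image _ 2 fun a ha => ?_
  obtain ⟨v, -, rfl⟩ := mem_image.1 ha
  calc _ ≤ #({v, -v} : Finset Fˣ) := card_le_card fun u hu => by
        rcases sq_eq_sq_iff_eq_or_eq_neg.1 (mem_filter.1 hu).2 with h | h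
        · simp [Units.ext h]
        · simp [Units.ext (h.trans (Units.val_neg v).symm)]
    _ ≤ 2 := card_le_two

namespace ZMod

variable {p : ℕ} [Fact p.Prime]

lemma add_eq_univ_of_lt_card_add_card {s t : Finset (ZMod p)} (hs : s.Nonempty)
    (ht : t.Nonempty) (h : p < #s + #t) : s + t = univ := by
  have := cauchy_davenport Fact.out hs ht
  refine eq_univ_of_card _ (le_antisymm (card_le_univ _) ?_)
  rw [card]
  omega

lemma add_add_eq_univ_of_lt_card_add_card_add_card {s t u : Finset (ZMod p)} (hs : s.Nonempty)
    (ht : t.Nonempty) (hu : u.Nonempty) (h : p + 1 < #s + #t + #u) : s + t + u = univ := by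
  have := cauchy_davenport Fact.out hs ht
  have := hu.card_pos
  exact add_eq_univ_of_lt_card_add_card (hs.add ht) hu (by omega)

lemma exists_Qp_mul_add_Qp_mul_add_Qp_mul_eq (hp : 7 ≤ p) {a b c : ZMod p} (ha : a ≠ 0)
    (hb : b ≠ 0) (hc : c ≠ 0) (s : ZMod p) :
    ∃ α ∈ Qp p, ∃ β ∈ Qp p, ∃ γ ∈ Qp p, α * a + β * b + γ * c = s := by
  set Q := univ.image fun u : (ZMod p)ˣ => (u : ZMod p) ^ 2
  have mem_Q {y : ZMod p} : y ∈ Q ↔ y ∈ Qp p := by simp [Q, Qp]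
  have hQ : p - 1 ≤ 2 * #Q := card_units p ▸ card_units_le_two_mul_card_image_sq (ZMod p)
  have hQ_ne : Q.Nonempty := card_pos.1 (by omega)
  have card_mul {d : ZMod p} (hd : d ≠ 0) : #(Q.image (· * d)) = #Q :=
    card_image_of_injective _ (mul_left_injective₀ hd)
  have hs : s ∈ Q.image (· * a) + Q.image (· * b) + Q.image (· * c) := by
    rw [add_add_eq_univ_of_lt_card_add_card_add_card (hQ_ne.image _) (hQ_ne.image _)
      (hQ_ne.image _) (by rw [card_mul ha, card_mul hb, card_mul hc]; omega)]
    exact mem_univ s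
  obtain ⟨_, ⟨_, ⟨α, hα, rfl⟩, _, ⟨β, hβ, rfl⟩, rfl⟩, _, ⟨γ, hγ, rfl⟩, rfl⟩ :=
    by simpa only [mem_add, mem_image] using hs
  exact ⟨α, mem_Q.1 hα, β, mem_Q.1 hβ, γ, mem_Q.1 hγ, rfl⟩

end ZMod

lemma exists_sum_mul_eq_zero_of_forall_exists_sum_mul_eq {R ι : Type*} [Ring R] [Fintype ι]
    [DecidableEq ι] {W : Set R} (hW : 1 ∈ W) (x : ι → R) (T : Finset ι)
    (hT : ∀ s, ∃ c : ι → R, (∀ i ∈ T, c i ∈ W) ∧ ∑ i ∈ T, c i * x i = s) :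
    ∃ c : ι → R, (∀ i, c i ∈ W) ∧ ∑ i, c i * x i = 0 := by
  obtain ⟨c, hcW, hc⟩ := hT (-∑ i ∈ Tᶜ, x i)
  refine ⟨fun i => if i ∈ T then c i else 1, fun i => ?_, ?_⟩
  · dsimp only
    split_ifs with hi
    exacts [hcW i hi, hW]
  · simp only [ite_mul, one_mul]
    rw [sum_ite]
    simp [hc, ← compl_filter]

theorem stmt_2 (p : ℕ) [Fact p.Prime] (hp : 7 ≤ p) (k : ℕ) (x : Fin k → ZMod p)
    (h : 3 ≤ (Finset.univ.filter (fun i => x i ≠ 0)).card) :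
    ∃ c : Fin k → ZMod p, (∀ i, c i ∈ Qp p) ∧ ∑ i, c i * x i = 0 := by
  obtain ⟨i, hi, j, hj, l, hl, hij, hil, hjl⟩ := two_lt_card.1 h
  simp only [mem_filter, mem_univ, true_and] at hi hj hl
  refine exists_sum_mul_eq_zero_of_forall_exists_sum_mul_eq (W := Qp p) ⟨1, one_pow 2⟩ x
    {i, j, l} fun s => ?_
  obtain ⟨α, hα, β, hβ, γ, hγ, hs⟩ := ZMod.exists_Qp_mul_add_Qp_mul_add_Qp_mul_eq hp hi hj hl s
  refine ⟨fun m => if m = i then α else if m = j then β else γ, ?_, ?_⟩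
  · simp only [mem_insert, mem_singleton]
    rintro m (rfl | rfl | rfl) <;> simp [*, Ne.symm]
  · rw [sum_insert (by simp [hij, hil]), sum_insert (by simp [hjl]), sum_singleton]
    simp [hij.symm, hil.symm, hjl.symm, ← hs, add_assoc]
end

section
/- Let p ≥ 7 be a prime and (x_1,...,x_k) a sequence in Z_p. If there exist c_1,...,c_k ∈ Q_p with c_1x_1+...+c_kx_k = 0 and c_1+...+c_k ≠ 0, then there exist weights d_1,...,d_k, d_{k+1}, d_{k+2} ∈ Q_p with d_1x_1+...+d_kx_k + d_{k+1}·0 + d_{k+2}·0 = 0 and d_1+...+d_{k+2} = 0; i.e., the sequence extended by two zeros is a (Q_p,1)-weighted zero-sum sequence. -/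
lemma sq_mem_Qp {p : ℕ} [Fact p.Prime] {a : ZMod p} (ha : a ≠ 0) : a ^ 2 ∈ Qp p :=
  ⟨Units.mk0 a ha, rfl⟩

lemma ZMod.natCast_ne_zero_of_pos_of_lt {p n : ℕ} (hn : 0 < n) (hnp : n < p) :
    (n : ZMod p) ≠ 0 := by
  rw [ne_eq, ZMod.natCast_eq_zero_iff]
  exact fun h => (Nat.le_of_dvd hn h).not_gt hnp

lemma sq_eq_three_mul_div_five_sq_add_four_mul_div_five_sq {F : Type*} [Field F]
    (h5 : (5 : F) ≠ 0) (a : F) : a ^ 2 = (3 * a / 5) ^ 2 + (4 * a / 5) ^ 2 := by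
  field_simp
  ring

lemma ZMod.exists_sq_add_sq_of_ne_zero {p : ℕ} [Fact p.Prime] (hp : 5 < p) {w : ZMod p}
    (hw : w ≠ 0) : ∃ a b : ZMod p, a ≠ 0 ∧ b ≠ 0 ∧ a ^ 2 + b ^ 2 = w := by
  have h3 : (3 : ZMod p) ≠ 0 :=
    mod_cast ZMod.natCast_ne_zero_of_pos_of_lt (n := 3) (by omega) (by omega)
  have h4 : (4 : ZMod p) ≠ 0 :=
    mod_cast ZMod.natCast_ne_zero_of_pos_of_lt (n := 4) (by omega) (by omega)
  have h5 : (5 : ZMod p) ≠ 0 :=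
    mod_cast ZMod.natCast_ne_zero_of_pos_of_lt (n := 5) (by omega) (by omega)
  have of_sq (c : ZMod p) (hc : c ≠ 0) :
      ∃ a b : ZMod p, a ≠ 0 ∧ b ≠ 0 ∧ a ^ 2 + b ^ 2 = c ^ 2 :=
    ⟨3 * c / 5, 4 * c / 5, by simp [h3, h5, hc], by simp [h4, h5, hc],
      (sq_eq_three_mul_div_five_sq_add_four_mul_div_five_sq h5 c).symm⟩
  obtain ⟨a, b, rfl⟩ := ZMod.sq_add_sq p w
  rcases eq_or_ne a 0 with rfl | ha
  · have hb : b ≠ 0 := by rintro rfl; simp at hw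
    simpa using of_sq b hb
  rcases eq_or_ne b 0 with rfl | hb
  · simpa using of_sq a ha
  exact ⟨a, b, ha, hb, rfl⟩

lemma exists_mem_Qp_add_eq_of_ne_zero {p : ℕ} [Fact p.Prime] (hp : 5 < p) {w : ZMod p}
    (hw : w ≠ 0) : ∃ a ∈ Qp p, ∃ b ∈ Qp p, a + b = w := by
  obtain ⟨a, b, ha, hb, hab⟩ := ZMod.exists_sq_add_sq_of_ne_zero hp hw
  exact ⟨a ^ 2, sq_mem_Qp ha, b ^ 2, sq_mem_Qp hb, hab⟩

theorem stmt_3 (p : ℕ) [Fact p.Prime] (hp : 7 ≤ p) (k : ℕ) (x : Fin k → ZMod p)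
    (c : Fin k → ZMod p) (hc : ∀ i, c i ∈ Qp p)
    (h1 : ∑ i, c i * x i = 0) (h2 : ∑ i, c i ≠ 0) :
    ∃ d : Fin k → ZMod p, ∃ d₁ d₂ : ZMod p,
      (∀ i, d i ∈ Qp p) ∧ d₁ ∈ Qp p ∧ d₂ ∈ Qp p ∧
      (∑ i, d i * x i) + d₁ * 0 + d₂ * 0 = 0 ∧
      (∑ i, d i) + d₁ + d₂ = 0 := by
  obtain ⟨a, ha, b, hb, hab⟩ := exists_mem_Qp_add_eq_of_ne_zero (by omega) (neg_ne_zero.mpr h2)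
  refine ⟨c, a, b, hc, ha, hb, by simp [h1], ?_⟩
  rw [add_assoc, hab, add_neg_cancel]
end

section
/- Let p ≥ 7 be a prime and let T be a sequence in Z_p with at least three nonzero terms. Then the sequence obtained from T by appending three zeros is a (Q_p,1)-weighted zero-sum sequence. -/
/-!
The dilates `x i • Q_p` of the set of quadratic residues have `(p - 1) / 2` elements when
`x i ≠ 0`, so by the Cauchy–Davenport theorem the sumset `∑ i, x i • Q_p` has at least
`min p (3 ((p - 1) / 2 - 1) + 1)` elements as soon as three `x i` are nonzero; for `p ≥ 7` this is
all of `ZMod p`. Hence every `t` is a sum `∑ a i * x i` with all `a i ∈ Q_p`: take `t = 0` for the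
weights of `T`, and then write `-∑ a i` as a sum of three residues for the weights of the zeros.
-/

open Finset
open scoped Pointwise

lemma ZMod.cauchy_davenport_finsetSum {p : ℕ} (hp : p.Prime) {ι : Type*} (s : Finset ι)
    {A : ι → Finset (ZMod p)} (hA : ∀ i ∈ s, (A i).Nonempty) :
    min p (∑ i ∈ s, (#(A i) - 1) + 1) ≤ #(∑ i ∈ s, A i) := by
  classical
  induction s using Finset.induction_on with
  | empty => simp
  | insert i s hi ih =>
    rw [sum_insert hi, sum_insert hi]
    have hAi := hA i (mem_insert_self i s)
    have ih := ih fun j hj => hA j (mem_insert_of_mem hj)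
    have hsum : (∑ j ∈ s, A j).Nonempty := card_pos.mp (by have := hp.pos; omega)
    have := ZMod.cauchy_davenport hp hAi hsum
    have := hAi.card_pos
    omega

def residues (p : ℕ) [NeZero p] : Finset (ZMod p) :=
  univ.image fun u : (ZMod p)ˣ => (u : ZMod p) ^ 2

section residues

variable {p : ℕ}

@[simp]
lemma coe_residues [NeZero p] : (residues p : Set (ZMod p)) = Qp p := by
  ext; simp [residues, Qp]

lemma residues_nonempty [NeZero p] : (residues p).Nonempty :=
  ⟨1, mem_image.mpr ⟨1, mem_univ _, one_pow 2⟩⟩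

lemma card_residues [Fact p.Prime] (hp : p ≠ 2) : #(residues p) = (p - 1) / 2 := by
  have h2 : 2 ∣ p - 1 :=
    (Nat.Odd.sub_odd ((Fact.out : p.Prime).odd_of_ne_two hp) odd_one).two_dvd
  have hsq : (fun u : (ZMod p)ˣ => (u : ZMod p) ^ 2) = Units.val ∘ powMonoidHom 2 := by
    ext; simp
  rw [residues, hsq, ← image_image, card_image_of_injective _ Units.val_injective,
    ← Set.toFinset_range, ← Nat.card_eq_card_toFinset, ← MonoidHom.coe_range,
    SetLike.coe_sort_coe, IsCyclic.card_powMonoidHom_range, Nat.card_eq_fintype_card,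
    ZMod.card_units, Nat.gcd_eq_right h2]

lemma card_smul_residues_sub_one [Fact p.Prime] (hp : p ≠ 2) (c : ZMod p) :
    #(c • residues p) - 1 = if c ≠ 0 then (p - 1) / 2 - 1 else 0 := by
  split_ifs with hc
  · rw [card_smul_finset₀ hc, card_residues hp]
  · rw [not_not.mp hc, zero_smul_finset residues_nonempty]
    rfl

theorem exists_mem_Qp_sum_mul_eq [Fact p.Prime] (hp : 7 ≤ p) {ι : Type*} [Fintype ι]
    (x : ι → ZMod p) (hx : 3 ≤ #{i | x i ≠ 0}) (t : ZMod p) :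
    ∃ a : ι → ZMod p, (∀ i, a i ∈ Qp p) ∧ ∑ i, a i * x i = t := by
  have hcard : p ≤ #(∑ i, x i • residues p) := by
    have := ZMod.cauchy_davenport_finsetSum (p := p) Fact.out univ
      fun i _ => residues_nonempty.smul_finset (a := x i)
    simp_rw [card_smul_residues_sub_one (by omega : p ≠ 2), ← sum_filter, sum_const,
      smul_eq_mul] at this
    have := Nat.mul_le_mul_right ((p - 1) / 2 - 1) hx
    have := Nat.odd_iff.mp ((Fact.out : p.Prime).odd_of_ne_two (by omega))
    omega
  have huniv : ∑ i, x i • residues p = univ :=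
    eq_univ_of_card _ ((card_le_univ _).antisymm (by rwa [ZMod.card]))
  have ht : t ∈ (↑(∑ i, x i • residues p) : Set (ZMod p)) := by simp [huniv]
  rw [coe_sum, Set.mem_fintype_sum] at ht
  obtain ⟨g, hg, rfl⟩ := ht
  choose a ha hag using fun i => mem_smul_finset.mp (hg i)
  exact ⟨a, fun i => coe_residues (p := p) ▸ ha i, by simp [← hag, mul_comm]⟩

end residues

theorem stmt_4 (p : ℕ) [Fact p.Prime] (hp : 7 ≤ p) (k : ℕ) (x : Fin k → ZMod p)
    (h : 3 ≤ (Finset.univ.filter (fun i => x i ≠ 0)).card) :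
    ∃ a : Fin k → ZMod p, ∃ b₁ b₂ b₃ : ZMod p,
      (∀ i, a i ∈ Qp p) ∧ b₁ ∈ Qp p ∧ b₂ ∈ Qp p ∧ b₃ ∈ Qp p ∧
      (∑ i, a i * x i) + b₁ * 0 + b₂ * 0 + b₃ * 0 = 0 ∧
      (∑ i, a i) + b₁ + b₂ + b₃ = 0 := by
  obtain ⟨a, ha, hax⟩ := exists_mem_Qp_sum_mul_eq hp x h 0
  obtain ⟨b, hb, hbsum⟩ := exists_mem_Qp_sum_mul_eq hp (fun _ : Fin 3 => (1 : ZMod p))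
    (by simp) (-∑ i, a i)
  refine ⟨a, b 0, b 1, b 2, ha, hb 0, hb 1, hb 2, by simp [hax], ?_⟩
  rw [Fin.sum_univ_three] at hbsum
  linear_combination hbsum
end

section
/- Let p be an odd prime, t ∈ Z_p, and z an element of the restricted sumset Q_p +̂ Q_p = {a + b : a, b ∈ Q_p, a ≠ b}. If x and x' are distinct elements of Q_p, then there exist c, c' ∈ Q_p with c·x + c'·x' = z and c + c' ≠ t. -/
lemma Qp_div_mem {p : ℕ} [Fact p.Prime] {a x : ZMod p} (ha : a ∈ Qp p) (hx : x ∈ Qp p) :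
    a / x ∈ Qp p := by
  obtain ⟨u, hu⟩ := ha
  obtain ⟨v, hv⟩ := hx
  refine ⟨u * v⁻¹, ?_⟩
  push_cast [Units.val_inv_eq_inv_val]
  rw [mul_pow, hu, inv_pow, hv, div_eq_mul_inv]

lemma Qp_ne_zero {p : ℕ} [Fact p.Prime] {x : ZMod p} (hx : x ∈ Qp p) : x ≠ 0 := by
  obtain ⟨u, hu⟩ := hx
  rw [← hu]
  exact pow_ne_zero _ u.ne_zero

theorem stmt_6 (p : ℕ) [Fact p.Prime] (hp : Odd p) (t : ZMod p) (z : ZMod p)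
    (hz : ∃ a ∈ Qp p, ∃ b ∈ Qp p, a ≠ b ∧ z = a + b)
    (x x' : ZMod p) (hx : x ∈ Qp p) (hx' : x' ∈ Qp p) (hne : x ≠ x') :
    ∃ c ∈ Qp p, ∃ c' ∈ Qp p, c * x + c' * x' = z ∧ c + c' ≠ t := by
  obtain ⟨a, ha, b, hb, hab, hzab⟩ := hz
  have hx0 : x ≠ 0 := Qp_ne_zero hx
  have hx'0 : x' ≠ 0 := Qp_ne_zero hx'
  by_cases h : a / x + b / x' = t
  · refine ⟨b / x, Qp_div_mem hb hx, a / x', Qp_div_mem ha hx', ?_, ?_⟩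
    · rw [div_mul_cancel₀ _ hx0, div_mul_cancel₀ _ hx'0, hzab, add_comm]
    · intro h2
      rw [← h] at h2
      have hba : b - a ≠ 0 := sub_ne_zero.mpr hab.symm
      have h3 : (b - a) * (x' - x) = 0 := by
        field_simp at h2
        linear_combination h2
      rcases mul_eq_zero.mp h3 with h4 | h4
      · exact hba h4
      · exact hne (sub_eq_zero.mp h4).symm
  · exact ⟨a / x, Qp_div_mem ha hx, b / x', Qp_div_mem hb hx',
      by rw [div_mul_cancel₀ _ hx0, div_mul_cancel₀ _ hx'0, hzab], h⟩
end

section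
/- Let p ≥ 11 be a prime, t ∈ Z_p, and z a unit of Z_p. If x and x' are distinct elements of Z_p belonging to the same coset of Q_p in U(p) (i.e., both in Q_p or both in N_p = U(p) \ Q_p), then there exist c, c' ∈ Q_p with c·x + c'·x' = z and c + c' ≠ t. -/
/-!
Normalize by `x`: with `a = x' / x` and `b = z / x` we want nonzero squares `y` and `b - a y`,
and then `c = b - a y`, `c' = y` works as soon as `c + c' = b + (1 - a) y` avoids `t`. Since
`a ≠ 1`, this fails for at most one `y`, so it suffices to find two such `y`. Expanding
`∑ (1 + χ y) (1 + χ (b - a y))` with the quadratic character `χ` gives `p - χ(-a)`, the cross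
term being a Jacobi sum; each summand is `4` on a solution and at most `2` at the two zeros
`y = 0`, `y = b / a`, so there are at least `(p - 5) / 4 ≥ 2` solutions.
-/

open Finset

section FiniteField

variable {F : Type*} [Field F] [Fintype F]

lemma sum_comp_sub_mul {M : Type*} [AddCommMonoid M] (f : F → M) (b : F) {a : F} (ha : a ≠ 0) :
    ∑ y, f (b - a * y) = ∑ w, f w :=
  Fintype.sum_equiv ((Equiv.mulLeft₀ a ha).trans (Equiv.subLeft b)) _ _ fun _ => rfl

variable [DecidableEq F]

lemma sum_quadraticChar_mul_quadraticChar_sub_mul (hF : ringChar F ≠ 2) {a b : F} (ha : a ≠ 0)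
    (hb : b ≠ 0) :
    ∑ y, quadraticChar F y * quadraticChar F (b - a * y) = -quadraticChar F (-a) := by
  set χ := quadraticChar F
  have hjac : ∑ u, χ u * χ (1 - u) = -χ (-1) := by
    have := jacobiSum_nontrivial_inv (quadraticChar_ne_one hF)
    rwa [(quadraticChar_isQuadratic F).inv, jacobiSum] at this
  have hba : b * a⁻¹ ≠ 0 := mul_ne_zero hb (inv_ne_zero ha)
  calc ∑ y, χ y * χ (b - a * y) = ∑ u, χ (b * a⁻¹ * u) * χ (b - a * (b * a⁻¹ * u)) :=
        (Fintype.sum_equiv (Equiv.mulLeft₀ _ hba) _ _ fun _ => rfl).symm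
    _ = ∑ u, χ b ^ 2 * χ a⁻¹ * (χ u * χ (1 - u)) := by
        refine sum_congr rfl fun u _ => ?_
        rw [show b - a * (b * a⁻¹ * u) = b * (1 - u) by field_simp]
        simp only [map_mul]; ring
    _ = -χ (-a) := by
        rw [← mul_sum, hjac, quadraticChar_sq_one hb, ← MulChar.inv_apply',
          (quadraticChar_isQuadratic F).inv, neg_eq_neg_one_mul a, map_mul]
        ring

lemma one_add_mul_one_add_le {u v : ℤ} (hu : u = 0 ∨ u = 1 ∨ u = -1)
    (hv : v = 0 ∨ v = 1 ∨ v = -1) :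
    (1 + u) * (1 + v) ≤ (if u = 1 ∧ v = 1 then 4 else 0) + (if u = 0 then 2 else 0) +
      (if v = 0 then 2 else 0) := by
  rcases hu with rfl | rfl | rfl <;> rcases hv with rfl | rfl | rfl <;> norm_num

def squareSolutions (a b : F) : Finset F :=
  univ.filter fun y => quadraticChar F y = 1 ∧ quadraticChar F (b - a * y) = 1

lemma card_le_four_mul_card_squareSolutions_add_five (hF : ringChar F ≠ 2) {a b : F}
    (ha : a ≠ 0) (hb : b ≠ 0) : Fintype.card F ≤ 4 * #(squareSolutions a b) + 5 := by
  set χ := quadraticChar F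
  have hcount : ∑ y, (1 + χ y) * (1 + χ (b - a * y)) = Fintype.card F - χ (-a) := by
    simp only [add_mul, one_mul, mul_add, mul_one, sum_add_distrib, sum_const, card_univ,
      nsmul_eq_mul, mul_one, sum_comp_sub_mul (fun w => χ w) b ha, χ, quadraticChar_sum_zero hF,
      sum_quadraticChar_mul_quadraticChar_sub_mul hF ha hb]
    ring
  have hzero : ∑ y : F, (if χ y = 0 then (2 : ℤ) else 0) = 2 := by
    simp only [χ, quadraticChar_eq_zero_iff, sum_ite_eq', mem_univ, if_true]
  have hbound : ∑ y, (1 + χ y) * (1 + χ (b - a * y)) ≤ 4 * #(squareSolutions a b) + 4 := calc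
    _ ≤ ∑ y, ((if χ y = 1 ∧ χ (b - a * y) = 1 then 4 else 0) + (if χ y = 0 then 2 else 0) +
          (if χ (b - a * y) = 0 then 2 else 0)) :=
        sum_le_sum fun y _ => one_add_mul_one_add_le ((quadraticChar_isQuadratic F) y)
          ((quadraticChar_isQuadratic F) _)
    _ = 4 * #(squareSolutions a b) + 4 := by
        rw [sum_add_distrib, sum_add_distrib,
          sum_comp_sub_mul (fun w => if χ w = 0 then (2 : ℤ) else 0) b ha, hzero, ← sum_filter,
          sum_const, nsmul_eq_mul, squareSolutions]
        ring
  have hχ : χ (-a) ≤ 1 := by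
    rcases (quadraticChar_isQuadratic F) (-a) with h | h | h <;> rw [h] <;> norm_num
  omega

lemma exists_mem_squareSolutions_sub_mul_add_ne (hF : ringChar F ≠ 2)
    (hcard : 11 ≤ Fintype.card F) {a b : F} (ha : a ≠ 0) (ha₁ : a ≠ 1) (hb : b ≠ 0)
    (t : F) :
    ∃ y ∈ squareSolutions a b, b - a * y + y ≠ t := by
  have htwo : 1 < #(squareSolutions a b) := by
    have := card_le_four_mul_card_squareSolutions_add_five hF ha hb
    omega
  obtain ⟨y₁, hy₁, y₂, hy₂, hne⟩ := one_lt_card.mp htwo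
  by_contra! h
  have : b - a * y₁ + y₁ = b - a * y₂ + y₂ := (h y₁ hy₁).trans (h y₂ hy₂).symm
  exact hne (mul_left_cancel₀ (sub_ne_zero.mpr ha₁.symm) (by linear_combination this))

end FiniteField

lemma isUnit_of_mem_Qp {p : ℕ} {x : ZMod p} (h : x ∈ Qp p) : IsUnit x := by
  obtain ⟨u, rfl⟩ := h
  exact u.isUnit.pow 2

lemma mem_Qp_of_quadraticChar_eq_one {p : ℕ} [Fact p.Prime] {w : ZMod p}
    (h : quadraticChar (ZMod p) w = 1) : w ∈ Qp p := by
  have hw : w ≠ 0 := by rintro rfl; simp at h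
  obtain ⟨r, rfl⟩ := (quadraticChar_one_iff_isSquare hw).mp h
  exact ⟨Units.mk0 r (by rintro rfl; simp at hw), sq r⟩

theorem stmt_8 (p : ℕ) [Fact p.Prime] (hp : 11 ≤ p) (t : ZMod p) (z : ZMod p)
    (hz : IsUnit z) (x x' : ZMod p) (hne : x ≠ x')
    (hcoset : (x ∈ Qp p ∧ x' ∈ Qp p) ∨ (x ∈ Np p ∧ x' ∈ Np p)) :
    ∃ c ∈ Qp p, ∃ c' ∈ Qp p, c * x + c' * x' = z ∧ c + c' ≠ t := by
  have hx : x ≠ 0 := (hcoset.elim (fun h => isUnit_of_mem_Qp h.1) (fun h => h.1.1)).ne_zero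
  have hx' : x' ≠ 0 := (hcoset.elim (fun h => isUnit_of_mem_Qp h.2) (fun h => h.2.1)).ne_zero
  have hF : ringChar (ZMod p) ≠ 2 := by rw [ZMod.ringChar_zmod_n]; omega
  obtain ⟨y, hy, hyt⟩ := exists_mem_squareSolutions_sub_mul_add_ne hF (by rwa [ZMod.card])
    (div_ne_zero hx' hx) (div_ne_one_of_ne hne.symm) (div_ne_zero hz.ne_zero hx) t
  rw [squareSolutions, mem_filter] at hy
  refine ⟨z / x - x' / x * y, mem_Qp_of_quadraticChar_eq_one hy.2.2, y,
    mem_Qp_of_quadraticChar_eq_one hy.2.1, ?_, hyt⟩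
  field_simp
  ring
end

section
/- Let p ≥ 11 be a prime and let (x_1,...,x_n) be a sequence in Z_p with at least one nonzero term. Suppose x and x' are distinct elements of Z_p in the same coset of Q_p in U(p). Then there exist c_1,...,c_n, c, c' ∈ Q_p with c_1x_1+...+c_nx_n + c·x + c'·x' = 0 and c_1+...+c_n + c + c' ≠ 0. -/
open Finset

section QuadraticCharSums

variable {F : Type*} [Field F] [Fintype F] [DecidableEq F]

local notation "χ" => quadraticChar F

theorem quadraticChar_inv' (a : F) : χ a⁻¹ = χ a := by
  rw [← MulChar.inv_apply', (quadraticChar_isQuadratic F).inv]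

theorem sum_quadraticChar_mul_quadraticChar_sub (hF : ringChar F ≠ 2) {m : F} (hm : m ≠ 0) :
    ∑ a, χ a * χ (m - a) = -χ (-1) := by
  have hm2 : χ m * χ m = 1 := by rw [← sq, quadraticChar_sq_one hm]
  calc ∑ a, χ a * χ (m - a) = ∑ b, χ (m * b) * χ (m - m * b) :=
        (Fintype.sum_equiv (Equiv.mulLeft₀ m hm) _ _ fun _ => rfl).symm
    _ = ∑ b, χ b * χ (1 - b) := by
        refine sum_congr rfl fun b _ => ?_
        rw [← mul_one_sub, map_mul, map_mul]
        linear_combination (χ b * χ (1 - b)) * hm2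
    _ = jacobiSum χ χ⁻¹ := by rw [(quadraticChar_isQuadratic F).inv]; rfl
    _ = -χ (-1) := jacobiSum_nontrivial_inv (quadraticChar_ne_one hF)

theorem sum_one_add_quadraticChar_mul_one_add_quadraticChar_sub (hF : ringChar F ≠ 2) {m : F}
    (hm : m ≠ 0) : ∑ a, (1 + χ a) * (1 + χ (m - a)) = Fintype.card F - χ (-1) := by
  have hshift : ∑ a, χ (m - a) = 0 :=
    (Fintype.sum_equiv (Equiv.subLeft m) _ _ fun _ => rfl).trans (quadraticChar_sum_zero hF)
  simp only [add_mul, one_mul, mul_add, mul_one, sum_add_distrib, quadraticChar_sum_zero hF,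
    hshift, sum_quadraticChar_mul_quadraticChar_sub hF hm, sum_const, card_univ, nsmul_eq_mul,
    mul_one]
  ring

theorem one_add_quadraticChar_mul_one_add_quadraticChar_sub {a m : F} (ha : a ≠ 0)
    (ham : a ≠ m) :
    (1 + χ a) * (1 + χ (m - a)) = if χ a = 1 ∧ χ (m - a) = 1 then 4 else 0 := by
  rcases quadraticChar_dichotomy ha with h | h <;>
    rcases quadraticChar_dichotomy (sub_ne_zero.mpr ham.symm) with h' | h' <;>
    simp [h, h']

theorem four_mul_card_quadraticChar_eq_one_and_sub (hF : ringChar F ≠ 2) {m : F} (hm : m ≠ 0) :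
    4 * (#{a | χ a = 1 ∧ χ (m - a) = 1} : ℤ) = Fintype.card F - χ (-1) - 2 * (1 + χ m) := by
  have hends : ∑ a, ((1 + χ a) * (1 + χ (m - a)) - if χ a = 1 ∧ χ (m - a) = 1 then 4 else 0)
      = 2 * (1 + χ m) := by
    rw [sum_eq_add 0 m hm.symm (fun a _ ⟨ha, ham⟩ => by
        rw [one_add_quadraticChar_mul_one_add_quadraticChar_sub ha ham, sub_self])
      (by simp) (by simp)]
    simp only [sub_zero, sub_self, quadraticChar_zero, add_zero, one_mul, mul_one, zero_ne_one,
      false_and, and_false, if_false]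
    ring
  rw [sum_sub_distrib, sum_one_add_quadraticChar_mul_one_add_quadraticChar_sub hF hm,
    ← sum_filter, sum_const, nsmul_eq_mul] at hends
  linear_combination -hends

theorem one_lt_card_quadraticChar_eq_one_and_sub (hF : ringChar F ≠ 2)
    (hcard : 10 ≤ Fintype.card F) {m : F} (hm : m ≠ 0) :
    1 < #{a | χ a = 1 ∧ χ (m - a) = 1} := by
  have hle : ∀ b : F, χ b ≤ 1 := fun b => by
    rcases eq_or_ne b 0 with rfl | hb
    · simp
    · rcases quadraticChar_dichotomy hb with h | h <;> simp [h]
  have := four_mul_card_quadraticChar_eq_one_and_sub hF hm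
  have := hle (-1)
  have := hle m
  have : (10 : ℤ) ≤ Fintype.card F := by exact_mod_cast hcard
  omega

theorem exists_quadraticChar_eq_one_mul_add_mul_eq_add_ne_zero (hF : ringChar F ≠ 2)
    (hcard : 10 ≤ Fintype.card F) {y y' : F} (hy : y ≠ 0) (hyy' : χ y = χ y') (hne : y ≠ y')
    {s : F} (hs : s ≠ 0) (B : F) :
    ∃ d d', χ d = 1 ∧ χ d' = 1 ∧ d * y + d' * y' = s ∧ B + d + d' ≠ 0 := by
  have hy' : y' ≠ 0 := fun h =>
    hy (quadraticChar_eq_zero_iff.mp (by rw [hyy', h, quadraticChar_zero]))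
  set q := y / y' with hq_def
  have hq : χ q = 1 := by
    rw [hq_def, div_eq_mul_inv, map_mul, quadraticChar_inv', hyy', ← sq, quadraticChar_sq_one hy']
  have hq1 : q⁻¹ - 1 ≠ 0 := by
    rw [sub_ne_zero, inv_ne_one, hq_def, Ne, div_eq_one_iff_eq hy']; exact hne
  have hsol : ∀ e, χ e = 1 → χ (s / y' - e) = 1 → B + e / q + (s / y' - e) ≠ 0 →
      ∃ d d', χ d = 1 ∧ χ d' = 1 ∧ d * y + d' * y' = s ∧ B + d + d' ≠ 0 := by
    intro e he he' hsum
    refine ⟨e / q, s / y' - e, ?_, he', ?_, hsum⟩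
    · rw [div_eq_mul_inv, map_mul, quadraticChar_inv', he, hq, one_mul]
    · rw [hq_def]
      field_simp
      ring
  obtain ⟨e₁, e₂, he₁, he₂, he⟩ :=
    one_lt_card_iff.mp (one_lt_card_quadraticChar_eq_one_and_sub hF hcard (div_ne_zero hs hy'))
  simp only [mem_filter, mem_univ, true_and] at he₁ he₂
  by_cases h₁ : B + e₁ / q + (s / y' - e₁) = 0
  · refine hsol e₂ he₂.1 he₂.2 fun h₂ => he ?_
    have : (e₁ - e₂) * (q⁻¹ - 1) = 0 := by linear_combination h₁ - h₂
    simpa [sub_eq_zero, hq1] using this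
  · exact hsol e₁ he₁.1 he₁.2 h₁

end QuadraticCharSums

theorem exists_update_sum_mul_ne_zero {ι K : Type*} [Fintype ι] [DecidableEq ι] [CommRing K]
    [NoZeroDivisors K] (c x : ι → K) {i : ι} (hi : x i ≠ 0) {u v : K} (huv : u ≠ v) :
    ∃ t ∈ ({u, v} : Set K), ∑ j, Function.update c i t j * x j ≠ 0 := by
  by_contra! h
  have hdiff : ∑ j, (Function.update c i u j - Function.update c i v j) * x j
      = (u - v) * x i := by
    rw [Fintype.sum_eq_single i fun j hj => by simp [Function.update_of_ne hj]]
    simp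
  rw [sum_congr rfl fun j _ => sub_mul _ _ (x j), sum_sub_distrib, h u (by simp),
    h v (by simp), sub_zero] at hdiff
  exact mul_ne_zero (sub_ne_zero.mpr huv) hi hdiff.symm

section ZMod

variable {p : ℕ} [Fact p.Prime]

theorem mem_Qp_iff_quadraticChar {a : ZMod p} : a ∈ Qp p ↔ quadraticChar (ZMod p) a = 1 := by
  constructor
  · rintro ⟨u, rfl⟩
    exact quadraticChar_sq_one' u.ne_zero
  · intro h
    have ha : a ≠ 0 := fun h0 => by simp [h0] at h
    obtain ⟨r, rfl⟩ := (quadraticChar_one_iff_isSquare ha).mp h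
    exact ⟨Units.mk0 r (by rintro rfl; simp at ha), by simp [sq]⟩

theorem quadraticChar_eq_neg_one_of_mem_Np {a : ZMod p} (ha : a ∈ Np p) :
    quadraticChar (ZMod p) a = -1 :=
  (quadraticChar_eq_neg_one_iff_not_one ha.1.ne_zero).mpr
    (mt mem_Qp_iff_quadraticChar.mpr ha.2)

theorem ne_zero_and_quadraticChar_eq_of_same_coset {y y' : ZMod p}
    (hcoset : (y ∈ Qp p ∧ y' ∈ Qp p) ∨ (y ∈ Np p ∧ y' ∈ Np p)) :
    y ≠ 0 ∧ quadraticChar (ZMod p) y = quadraticChar (ZMod p) y' := by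
  rcases hcoset with ⟨h, h'⟩ | ⟨h, h'⟩
  · rw [mem_Qp_iff_quadraticChar] at h h'
    exact ⟨fun h0 => by simp [h0] at h, h.trans h'.symm⟩
  · exact ⟨h.1.ne_zero, (quadraticChar_eq_neg_one_of_mem_Np h).trans
      (quadraticChar_eq_neg_one_of_mem_Np h').symm⟩

theorem exists_forall_mem_Qp_sum_mul_ne_zero (hp : 5 ≤ p) {n : ℕ} {x : Fin n → ZMod p}
    (hx : ∃ i, x i ≠ 0) :
    ∃ c : Fin n → ZMod p, (∀ j, c j ∈ Qp p) ∧ ∑ j, c j * x j ≠ 0 := by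
  have h1 : (1 : ZMod p) ∈ Qp p := ⟨1, one_pow 2⟩
  have h4 : (4 : ZMod p) ∈ Qp p := mem_Qp_iff_quadraticChar.mpr <| by
    rw [show (4 : ZMod p) = 2 ^ 2 by norm_num]
    exact quadraticChar_sq_one' (Ring.two_ne_zero (by rw [ZMod.ringChar_zmod_n]; omega))
  have h14 : (1 : ZMod p) ≠ 4 := fun h => by
    have h3 : ((3 : ℕ) : ZMod p) = 0 := by push_cast; linear_combination -h
    have := Nat.le_of_dvd (by norm_num) ((ZMod.natCast_eq_zero_iff 3 p).mp h3)
    omega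
  obtain ⟨i, hi⟩ := hx
  obtain ⟨t, ht, hS⟩ := exists_update_sum_mul_ne_zero 1 x hi h14
  refine ⟨_, fun j => ?_, hS⟩
  rcases eq_or_ne j i with rfl | hj
  · rw [Function.update_self]; rcases ht with rfl | rfl <;> assumption
  · rw [Function.update_of_ne hj]; exact h1

end ZMod

theorem stmt_9 (p : ℕ) [Fact p.Prime] (hp : 11 ≤ p) (n : ℕ) (x : Fin n → ZMod p)
    (hx : ∃ i, x i ≠ 0) (y y' : ZMod p) (hne : y ≠ y')
    (hcoset : (y ∈ Qp p ∧ y' ∈ Qp p) ∨ (y ∈ Np p ∧ y' ∈ Np p)) :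
    ∃ c : Fin n → ZMod p, ∃ d ∈ Qp p, ∃ d' ∈ Qp p,
      (∀ i, c i ∈ Qp p) ∧
      (∑ i, c i * x i) + d * y + d' * y' = 0 ∧
      (∑ i, c i) + d + d' ≠ 0 := by
  have hchar : ringChar (ZMod p) ≠ 2 := by rw [ZMod.ringChar_zmod_n]; omega
  have hcard : 10 ≤ Fintype.card (ZMod p) := by rw [ZMod.card]; omega
  obtain ⟨hy, hyy'⟩ := ne_zero_and_quadraticChar_eq_of_same_coset hcoset
  obtain ⟨c, hc, hS⟩ := exists_forall_mem_Qp_sum_mul_ne_zero (by omega) hx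
  obtain ⟨d, d', hd, hd', hlin, hsum⟩ := exists_quadraticChar_eq_one_mul_add_mul_eq_add_ne_zero
    hchar hcard hy hyy' hne (neg_ne_zero.mpr hS) (∑ j, c j)
  exact ⟨c, d, mem_Qp_iff_quadraticChar.mpr hd, d', mem_Qp_iff_quadraticChar.mpr hd', hc,
    by linear_combination hlin, hsum⟩
end

section
/- Let (x_1,...,x_n) be a sequence in Z_7 with at least two nonzero terms, and let x, x' be distinct elements of Z_7 in the same coset of Q_7 in U(7). Then there exist c_1,...,c_n, c, c' ∈ Q_7 with c_1x_1+...+c_nx_n + c·x + c'·x' = 0 and c_1+...+c_n + c + c' ≠ 0. -/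
def L : List (ZMod 7) := [1, 2, 4]

set_option maxHeartbeats 1000000 in
lemma keyBool : ∀ a b q R S : ZMod 7, a ≠ 0 → b ≠ 0 → (q = 2 ∨ q = 4) →
    (L.any fun c => L.any fun c' => L.any fun d => L.any fun d' =>
      decide (c * a + c' * b + d + d' * q = R) && decide (c + c' + d + d' ≠ S)) = true := by
  decide

lemma key (a b q R S : ZMod 7) (ha : a ≠ 0) (hb : b ≠ 0) (hq : q = 2 ∨ q = 4) :
    ∃ c c' d d' : ZMod 7, (c = 1 ∨ c = 2 ∨ c = 4) ∧ (c' = 1 ∨ c' = 2 ∨ c' = 4) ∧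
      (d = 1 ∨ d = 2 ∨ d = 4) ∧ (d' = 1 ∨ d' = 2 ∨ d' = 4) ∧
      c * a + c' * b + d + d' * q = R ∧ c + c' + d + d' ≠ S := by
  have h := keyBool a b q R S ha hb hq
  simp only [L, List.any_eq_true, List.mem_cons, List.not_mem_nil, or_false,
    Bool.and_eq_true, decide_eq_true_eq] at h
  obtain ⟨c, hc, c', hc', d, hd, d', hd', h1, h2⟩ := h
  exact ⟨c, c', d, d', hc, hc', hd, hd', h1, h2⟩

lemma ratio : ∀ y y' : ZMod 7, y ≠ y' →
    ((y = 1 ∨ y = 2 ∨ y = 4) ∧ (y' = 1 ∨ y' = 2 ∨ y' = 4)) ∨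
    ((y = 3 ∨ y = 5 ∨ y = 6) ∧ (y' = 3 ∨ y' = 5 ∨ y' = 6)) →
    ∃ q : ZMod 7, (q = 2 ∨ q = 4) ∧ y' = q * y ∧ y ≠ 0 := by
  decide

lemma mem_Qp7 (z : ZMod 7) : z ∈ Qp 7 ↔ (z = 1 ∨ z = 2 ∨ z = 4) := by
  constructor
  · rintro ⟨u, rfl⟩
    haveI : Nontrivial (ZMod 7) := ⟨⟨0, 1, by decide⟩⟩
    have h : (u : ZMod 7) ≠ 0 := u.ne_zero
    revert h
    have : ∀ w : ZMod 7, w ≠ 0 → (w ^ 2 = 1 ∨ w ^ 2 = 2 ∨ w ^ 2 = 4) := by decide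
    exact this _
  · rintro (rfl | rfl | rfl)
    · exact ⟨1, by decide⟩
    · exact ⟨⟨3, 5, by decide, by decide⟩, by decide⟩
    · exact ⟨⟨2, 4, by decide, by decide⟩, by decide⟩

lemma mem_Np7 (z : ZMod 7) : z ∈ Np 7 ↔ (z = 3 ∨ z = 5 ∨ z = 6) := by
  constructor
  · rintro ⟨hu, hq⟩
    rw [mem_Qp7] at hq
    have hz : z ≠ 0 := by
      rintro rfl
      exact (by decide : ¬ IsUnit (0 : ZMod 7)) hu
    have : ∀ w : ZMod 7, ¬(w = 1 ∨ w = 2 ∨ w = 4) → w ≠ 0 → (w = 3 ∨ w = 5 ∨ w = 6) := by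
      decide
    exact this z hq hz
  · intro h
    refine ⟨?_, ?_⟩
    · rcases h with rfl | rfl | rfl <;> decide
    · rw [mem_Qp7]; rcases h with rfl | rfl | rfl <;> decide

theorem stmt_11 (n : ℕ) (x : Fin n → ZMod 7)
    (hx : 2 ≤ (Finset.univ.filter (fun i => x i ≠ 0)).card)
    (y y' : ZMod 7) (hne : y ≠ y')
    (hcoset : (y ∈ Qp 7 ∧ y' ∈ Qp 7) ∨ (y ∈ Np 7 ∧ y' ∈ Np 7)) :
    ∃ c : Fin n → ZMod 7, ∃ d ∈ Qp 7, ∃ d' ∈ Qp 7,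
      (∀ i, c i ∈ Qp 7) ∧
      (∑ i, c i * x i) + d * y + d' * y' = 0 ∧
      (∑ i, c i) + d + d' ≠ 0 := by
  haveI : Fact (Nat.Prime 7) := ⟨by norm_num⟩
  -- extract two distinct nonzero indices
  obtain ⟨j, hj, k, hk, hjk⟩ := Finset.one_lt_card.mp (lt_of_lt_of_le one_lt_two hx)
  rw [Finset.mem_filter] at hj hk
  have hxj : x j ≠ 0 := hj.2
  have hxk : x k ≠ 0 := hk.2
  -- get the ratio q
  obtain ⟨q, hq, hyy', hy0⟩ := ratio y y' hne (by
    rcases hcoset with ⟨h1, h2⟩ | ⟨h1, h2⟩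
    · exact Or.inl ⟨(mem_Qp7 y).mp h1, (mem_Qp7 y').mp h2⟩
    · exact Or.inr ⟨(mem_Np7 y).mp h1, (mem_Np7 y').mp h2⟩)
  set s : Finset (Fin n) := (Finset.univ.erase j).erase k with hs
  set R0 : ZMod 7 := ∑ i ∈ s, x i with hR0
  set S0 : ZMod 7 := ∑ i ∈ s, (1 : ZMod 7) with hS0
  obtain ⟨c, c', d, d', hc, hc', hd, hd', h1, h2⟩ :=
    key (x j * y⁻¹) (x k * y⁻¹) q (-R0 * y⁻¹) (-S0)
      (mul_ne_zero hxj (inv_ne_zero hy0)) (mul_ne_zero hxk (inv_ne_zero hy0)) hq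
  refine ⟨fun i => if i = j then c else if i = k then c' else 1,
    d, (mem_Qp7 d).mpr hd, d', (mem_Qp7 d').mpr hd', ?_, ?_, ?_⟩
  · intro i
    rw [mem_Qp7]
    dsimp only
    split
    · exact hc
    · split
      · exact hc'
      · exact Or.inl rfl
  all_goals
    have hkj : k ∈ Finset.univ.erase j := Finset.mem_erase.mpr ⟨hjk.symm, Finset.mem_univ k⟩
    have esum : ∀ f : Fin n → ZMod 7, ∑ i, f i = f j + (f k + ∑ i ∈ s, f i) := by
      intro f
      rw [← Finset.add_sum_erase _ f (Finset.mem_univ j), ← Finset.add_sum_erase _ f hkj]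
  · -- main equation
    rw [esum]
    dsimp only
    have hrest : ∑ i ∈ s, (if i = j then c else if i = k then c' else 1) * x i = R0 := by
      rw [hR0]
      refine Finset.sum_congr rfl fun i hi => ?_
      rw [hs] at hi
      have hik : i ≠ k := (Finset.mem_erase.mp hi).1
      have hij : i ≠ j := (Finset.mem_erase.mp (Finset.mem_erase.mp hi).2).1
      rw [if_neg hij, if_neg hik, one_mul]
    rw [if_pos rfl, if_neg hjk.symm, if_pos rfl, hrest, hyy']
    field_simp at h1
    linear_combination h1
  · -- sum of coefficients nonzero
    rw [esum]
    have hrest : ∑ i ∈ s, (if i = j then c else if i = k then c' else 1) = S0 := by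
      rw [hS0]
      refine Finset.sum_congr rfl fun i hi => ?_
      rw [hs] at hi
      have hik : i ≠ k := (Finset.mem_erase.mp hi).1
      have hij : i ≠ j := (Finset.mem_erase.mp (Finset.mem_erase.mp hi).2).1
      rw [if_neg hij, if_neg hik]
    rw [if_pos rfl, if_neg hjk.symm, if_pos rfl, hrest]
    intro H
    exact h2 (by linear_combination H)
end

section
/- Let p ≥ 7 be a prime with p ≡ 1 (mod 4), and let S be a sequence in Z_p with at least two zero terms and at least three nonzero terms. Then S is a (Q_p,1)-weighted zero-sum sequence. -/
/-!
Among three nonzero entries two, say `x` and `y`, have the same quadratic character, so `x / y`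
is a nonzero square. Since `p ≡ 1 (mod 4)` and `p ≥ 7`, every element of `ZMod p` is a sum of
two nonzero squares; hence weights in `Q_p` at these two entries can absorb any value of `∑ S`,
with weight `1` elsewhere, making `∑ aᵢ Sᵢ = 0`. Two zero entries then absorb, in the same way,
the total weight, without changing `∑ aᵢ Sᵢ`.
-/

open Function Matrix

theorem update_dotProduct {ι R : Type*} [Fintype ι] [DecidableEq ι] [CommRing R]
    (f g : ι → R) (i : ι) (x : R) : update f i x ⬝ᵥ g = f ⬝ᵥ g + (x - f i) * g i := by
  have : update f i x = f + Pi.single i (x - f i) := by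
    ext k
    rcases eq_or_ne k i with rfl | hk <;> simp [*]
  rw [this, add_dotProduct, single_dotProduct]

theorem isSquare_mul_of_isSquare_iff {F : Type*} [Field F] [Fintype F] [DecidableEq F]
    {a b : F} (ha : a ≠ 0) (hb : b ≠ 0) (h : IsSquare a ↔ IsSquare b) : IsSquare (a * b) := by
  by_cases hsa : IsSquare a
  · exact hsa.mul (h.1 hsa)
  · rw [← quadraticChar_one_iff_isSquare (mul_ne_zero ha hb), map_mul,
      quadraticChar_neg_one_iff_not_isSquare.2 hsa,
      quadraticChar_neg_one_iff_not_isSquare.2 (h.not.1 hsa)]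
    rfl

theorem exists_ne_isSquare_mul {ι F : Type*} [Fintype ι] [Field F] [Fintype F] [DecidableEq F]
    {S : ι → F} (h : 2 < (Finset.univ.filter (fun i => S i ≠ 0)).card) :
    ∃ i₁ i₂, i₁ ≠ i₂ ∧ S i₁ ≠ 0 ∧ S i₂ ≠ 0 ∧ IsSquare (S i₁ * S i₂) := by
  obtain ⟨i₁, h₁, i₂, h₂, i₃, h₃, h₁₂, h₁₃, h₂₃⟩ := Finset.two_lt_card.1 h
  simp only [Finset.mem_filter, Finset.mem_univ, true_and] at h₁ h₂ h₃
  have : (IsSquare (S i₁) ↔ IsSquare (S i₂)) ∨ (IsSquare (S i₁) ↔ IsSquare (S i₃)) ∨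
      (IsSquare (S i₂) ↔ IsSquare (S i₃)) := by
    tauto
  rcases this with h | h | h
  · exact ⟨i₁, i₂, h₁₂, h₁, h₂, isSquare_mul_of_isSquare_iff h₁ h₂ h⟩
  · exact ⟨i₁, i₃, h₁₃, h₁, h₃, isSquare_mul_of_isSquare_iff h₁ h₃ h⟩
  · exact ⟨i₂, i₃, h₂₃, h₂, h₃, isSquare_mul_of_isSquare_iff h₂ h₃ h⟩

section Qp

variable {p : ℕ} [Fact p.Prime]

theorem mem_Qp_iff {x : ZMod p} : x ∈ Qp p ↔ x ≠ 0 ∧ IsSquare x := by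
  constructor
  · rintro ⟨u, rfl⟩
    exact ⟨pow_ne_zero _ u.ne_zero, ⟨u, sq _⟩⟩
  · rintro ⟨hx, y, rfl⟩
    exact ⟨Units.mk0 y (left_ne_zero_of_mul hx), sq y⟩

theorem sq_mem_Qp_s12 {y : ZMod p} (hy : y ≠ 0) : y ^ 2 ∈ Qp p :=
  ⟨Units.mk0 y hy, rfl⟩

theorem one_mem_Qp : (1 : ZMod p) ∈ Qp p :=
  ⟨1, one_pow 2⟩

theorem mul_mem_Qp {x y : ZMod p} (hx : x ∈ Qp p) (hy : y ∈ Qp p) : x * y ∈ Qp p := by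
  obtain ⟨u, rfl⟩ := hx
  obtain ⟨v, rfl⟩ := hy
  exact ⟨u * v, by push_cast; ring⟩

/-- The Pythagorean triple `(3, 4, 5)`. -/
theorem exists_mem_Qp_add_eq_sq (hp : 7 ≤ p) {c : ZMod p} (hc : c ≠ 0) :
    ∃ w₁ ∈ Qp p, ∃ w₂ ∈ Qp p, w₁ + w₂ = c ^ 2 := by
  have hne : ∀ n : ℕ, 0 < n → n < p → (n : ZMod p) ≠ 0 := fun n h0 hn => by
    rw [Ne, ZMod.natCast_eq_zero_iff]
    exact Nat.not_dvd_of_pos_of_lt h0 hn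
  have h3 : (3 : ZMod p) ≠ 0 := by exact_mod_cast hne 3 (by norm_num) (by omega)
  have h4 : (4 : ZMod p) ≠ 0 := by exact_mod_cast hne 4 (by norm_num) (by omega)
  have h5 : (5 : ZMod p) ≠ 0 := by exact_mod_cast hne 5 (by norm_num) (by omega)
  refine ⟨(3 * c / 5) ^ 2, sq_mem_Qp_s12 (by simp [*]), (4 * c / 5) ^ 2, sq_mem_Qp_s12 (by simp [*]), ?_⟩
  field_simp
  ring

theorem exists_mem_Qp_add_eq (hp : 7 ≤ p) (hp1 : p % 4 = 1) (d : ZMod p) :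
    ∃ w₁ ∈ Qp p, ∃ w₂ ∈ Qp p, w₁ + w₂ = d := by
  rcases eq_or_ne d 0 with rfl | hd
  · have hneg : IsSquare (-1 : ZMod p) := ZMod.exists_sq_eq_neg_one_iff.2 (by omega)
    exact ⟨1, one_mem_Qp, -1, mem_Qp_iff.2 ⟨neg_ne_zero.2 one_ne_zero, hneg⟩, add_neg_cancel 1⟩
  by_cases hsq : IsSquare d
  · obtain ⟨c, rfl⟩ := hsq
    rw [← sq]
    exact exists_mem_Qp_add_eq_sq hp (left_ne_zero_of_mul hd)
  · obtain ⟨a, b, hab⟩ := ZMod.sq_add_sq p d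
    have ha : a ≠ 0 := by rintro rfl; exact hsq ⟨b, by rw [← hab]; ring⟩
    have hb : b ≠ 0 := by rintro rfl; exact hsq ⟨a, by rw [← hab]; ring⟩
    exact ⟨a ^ 2, sq_mem_Qp_s12 ha, b ^ 2, sq_mem_Qp_s12 hb, hab⟩

theorem exists_mem_Qp_mul_add_mul_eq (hp : 7 ≤ p) (hp1 : p % 4 = 1) {x y : ZMod p}
    (hx : x ≠ 0) (hy : y ≠ 0) (hxy : IsSquare (x * y)) (c : ZMod p) :
    ∃ a₁ ∈ Qp p, ∃ a₂ ∈ Qp p, a₁ * x + a₂ * y = c := by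
  obtain ⟨w₁, hw₁, w₂, hw₂, hw⟩ := exists_mem_Qp_add_eq hp hp1 (c / x)
  have hr : x / y ∈ Qp p := by
    have : x / y = x * y / (y * y) := by field_simp
    exact mem_Qp_iff.2 ⟨div_ne_zero hx hy, this ▸ hxy.div (IsSquare.mul_self y)⟩
  refine ⟨w₁, hw₁, w₂ * (x / y), mul_mem_Qp hw₂ hr, ?_⟩
  rw [mul_assoc, div_mul_cancel₀ x hy, ← add_mul, hw, div_mul_cancel₀ c hx]

variable {ι : Type*} [Fintype ι] [DecidableEq ι]

theorem exists_Qp_weights_dotProduct_eq_zero (hp : 7 ≤ p) (hp1 : p % 4 = 1) {S : ι → ZMod p}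
    {i₁ i₂ : ι} (hi : i₁ ≠ i₂) (h₁ : S i₁ ≠ 0) (h₂ : S i₂ ≠ 0) (hsq : IsSquare (S i₁ * S i₂)) :
    ∃ b : ι → ZMod p, (∀ i, b i ∈ Qp p) ∧ b ⬝ᵥ S = 0 := by
  obtain ⟨a₁, ha₁, a₂, ha₂, ha⟩ :=
    exists_mem_Qp_mul_add_mul_eq hp hp1 h₁ h₂ hsq (S i₁ + S i₂ - 1 ⬝ᵥ S)
  refine ⟨update (update 1 i₁ a₁) i₂ a₂, ?_, ?_⟩
  · refine (forall_update_iff _ fun _ w => w ∈ Qp p).2 ⟨ha₂, fun k _ => ?_⟩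
    exact (forall_update_iff _ fun _ w => w ∈ Qp p).2 ⟨ha₁, fun _ _ => one_mem_Qp⟩ k
  · rw [update_dotProduct, update_dotProduct, update_of_ne hi.symm]
    simp only [Pi.one_apply]
    linear_combination ha

theorem exists_Qp_weights_of_two_zeros (hp : 7 ≤ p) (hp1 : p % 4 = 1) {S : ι → ZMod p}
    (hz : 1 < (Finset.univ.filter (fun i => S i = 0)).card) {b : ι → ZMod p}
    (hb : ∀ i, b i ∈ Qp p) (hbS : b ⬝ᵥ S = 0) :
    ∃ a : ι → ZMod p, (∀ i, a i ∈ Qp p) ∧ a ⬝ᵥ S = 0 ∧ a ⬝ᵥ 1 = 0 := by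
  obtain ⟨j₁, h₁, j₂, h₂, hj⟩ := Finset.one_lt_card.1 hz
  simp only [Finset.mem_filter, Finset.mem_univ, true_and] at h₁ h₂
  obtain ⟨w₁, hw₁, w₂, hw₂, hw⟩ := exists_mem_Qp_add_eq hp hp1 (b j₁ + b j₂ - b ⬝ᵥ 1)
  refine ⟨update (update b j₁ w₁) j₂ w₂, ?_, ?_, ?_⟩
  · refine (forall_update_iff _ fun _ w => w ∈ Qp p).2 ⟨hw₂, fun k _ => ?_⟩
    exact (forall_update_iff _ fun _ w => w ∈ Qp p).2 ⟨hw₁, fun k _ => hb k⟩ k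
  · rw [update_dotProduct, update_dotProduct, h₁, h₂, hbS]
    ring
  · rw [update_dotProduct, update_dotProduct, update_of_ne hj.symm]
    simp only [Pi.one_apply]
    linear_combination hw

end Qp

theorem stmt_12 (p : ℕ) [Fact p.Prime] (hp : 7 ≤ p) (hp1 : p % 4 = 1)
    (m : ℕ) (S : Fin m → ZMod p)
    (hz : 2 ≤ (Finset.univ.filter (fun i => S i = 0)).card)
    (hnz : 3 ≤ (Finset.univ.filter (fun i => S i ≠ 0)).card) :
    ∃ a : Fin m → ZMod p, (∀ i, a i ∈ Qp p) ∧
      ∑ i, a i * S i = 0 ∧ ∑ i, a i = 0 := by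
  obtain ⟨i₁, i₂, hi, h₁, h₂, hsq⟩ := exists_ne_isSquare_mul hnz
  obtain ⟨b, hbQ, hbS⟩ := exists_Qp_weights_dotProduct_eq_zero hp hp1 hi h₁ h₂ hsq
  obtain ⟨a, haQ, haS, ha⟩ := exists_Qp_weights_of_two_zeros hp hp1 hz hbQ hbS
  exact ⟨a, haQ, haS, by rwa [dotProduct_one] at ha⟩
end

section
/- Let p ≥ 11 be a prime and let x_1, x_2, x_3 be three pairwise distinct nonzero elements of Z_p. Then there exist c_1, c_2, c_3 ∈ Q_p with c_1x_1 + c_2x_2 + c_3x_3 = 0 and c_1 + c_2 + c_3 ≠ 0. -/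
open Finset

theorem stmt_13 (p : ℕ) [Fact p.Prime] (hp : 11 ≤ p) (x₁ x₂ x₃ : ZMod p)
    (h1 : x₁ ≠ 0) (h2 : x₂ ≠ 0) (h3 : x₃ ≠ 0)
    (h12 : x₁ ≠ x₂) (h13 : x₁ ≠ x₃) (h23 : x₂ ≠ x₃) :
    ∃ c₁ ∈ Qp p, ∃ c₂ ∈ Qp p, ∃ c₃ ∈ Qp p,
      c₁ * x₁ + c₂ * x₂ + c₃ * x₃ = 0 ∧ c₁ + c₂ + c₃ ≠ 0 := by
  classical
  have hchar : ringChar (ZMod p) ≠ 2 := by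
    rw [ZMod.ringChar_zmod_n]; omega
  set χ := quadraticChar (ZMod p) with hχdef
  have hQpIff : ∀ z : ZMod p, z ∈ Qp p ↔ χ z = 1 := by
    intro z
    constructor
    · rintro ⟨u, hu⟩
      have hz0 : z ≠ 0 := by
        rw [← hu]; exact pow_ne_zero _ (Units.ne_zero u)
      exact (quadraticChar_one_iff_isSquare hz0).mpr ⟨u, by rw [← hu]; ring⟩
    · intro h
      have hz0 : z ≠ 0 := by
        intro h0; rw [h0] at h; simp [hχdef, quadraticChar_zero] at h
      obtain ⟨w, hw⟩ := (quadraticChar_one_iff_isSquare hz0).mp h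
      have hw0 : w ≠ 0 := by rintro rfl; simp [hw] at hz0
      exact ⟨Units.mk0 w hw0, by simp [hw, sq]⟩
  set y : ZMod p := -x₃ with hy
  have hy0 : y ≠ 0 := neg_ne_zero.mpr h3
  set α : ZMod p := x₁⁻¹ with hα
  set β : ZMod p := x₂⁻¹ with hβ
  have hα0 : α ≠ 0 := inv_ne_zero h1
  have hβ0 : β ≠ 0 := inv_ne_zero h2
  set F : ZMod p → ℤ := fun s => (1 + χ (s * α)) * (1 + χ ((y - s) * β)) with hF
  -- key sum : ∑ s, χ (s * (y - s)) = -χ (-1)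
  have key : ∑ s : ZMod p, χ (s * (y - s)) = -χ (-1) := by
    have h1' : ∑ s : ZMod p, χ (s * (y - s))
        = ∑ s ∈ univ.erase (0 : ZMod p), χ (s * (y - s)) := by
      rw [Finset.sum_erase]
      simp [hχdef]
    have h2' : ∀ s ∈ univ.erase (0 : ZMod p), χ (s * (y - s)) = χ (y * s⁻¹ - 1) := by
      intro s hs
      have hs0 : s ≠ 0 := (Finset.mem_erase.mp hs).1
      have hid : s * (y - s) = s ^ 2 * (y * s⁻¹ - 1) := by
        field_simp
      rw [hid, map_mul, quadraticChar_sq_one' hs0, one_mul]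
    have h3' : ∑ s ∈ univ.erase (0 : ZMod p), χ (y * s⁻¹ - 1)
        = ∑ t ∈ univ.erase (0 : ZMod p), χ (t - 1) := by
      apply Finset.sum_nbij' (fun s => y * s⁻¹) (fun t => y * t⁻¹)
      · intro a ha
        simp only [Finset.mem_erase, Finset.mem_univ, and_true] at ha ⊢
        exact mul_ne_zero hy0 (inv_ne_zero ha)
      · intro a ha
        simp only [Finset.mem_erase, Finset.mem_univ, and_true] at ha ⊢
        exact mul_ne_zero hy0 (inv_ne_zero ha)
      · intro a ha
        simp only [Finset.mem_erase, Finset.mem_univ, and_true] at ha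
        field_simp
      · intro a ha
        simp only [Finset.mem_erase, Finset.mem_univ, and_true] at ha
        field_simp
      · intro a ha; rfl
    have h4' : ∑ t ∈ univ.erase (0 : ZMod p), χ (t - 1)
        = (∑ t : ZMod p, χ (t - 1)) - χ (-1) := by
      rw [← Finset.add_sum_erase _ (fun t => χ (t - 1)) (Finset.mem_univ (0 : ZMod p))]
      simp
    have h5' : ∑ t : ZMod p, χ (t - 1) = ∑ t : ZMod p, χ t :=
      Fintype.sum_equiv (Equiv.subRight (1 : ZMod p)) _ _ (fun t => rfl)
    rw [h1', Finset.sum_congr rfl h2', h3', h4', h5', quadraticChar_sum_zero hchar]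
    ring
  have sumχ : ∑ s : ZMod p, χ s = 0 := quadraticChar_sum_zero hchar
  have hsum : ∑ s : ZMod p, F s = (p : ℤ) + χ α * χ β * (-χ (-1)) := by
    have expand : ∀ s : ZMod p, F s
        = 1 + χ α * χ s + χ β * χ (y - s) + χ α * χ β * (χ s * χ (y - s)) := by
      intro s
      simp only [hF, map_mul]
      ring
    rw [Finset.sum_congr rfl (fun s _ => expand s), Finset.sum_add_distrib,
      Finset.sum_add_distrib, Finset.sum_add_distrib, ← Finset.mul_sum, ← Finset.mul_sum,
      ← Finset.mul_sum]
    have e1 : ∑ _s : ZMod p, (1 : ℤ) = (p : ℤ) := by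
      simp [ZMod.card]
    have e2 : ∑ s : ZMod p, χ (y - s) = 0 := by
      rw [Fintype.sum_equiv (Equiv.subLeft y) (fun s => χ (y - s)) (fun t => χ t)
        (fun s => rfl)]
      exact sumχ
    have e3 : ∑ s : ZMod p, χ s * χ (y - s) = -χ (-1) := by
      rw [← key]; exact Finset.sum_congr rfl fun s _ => (map_mul χ s (y - s)).symm
    rw [e1, e2, e3, sumχ]
    ring
  have hbound : ∀ z : ZMod p, -1 ≤ χ z ∧ χ z ≤ 1 := by
    intro z
    by_cases hz : z = 0
    · rw [hz]; simp [hχdef, quadraticChar_zero]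
    · rcases quadraticChar_dichotomy hz with h | h <;> rw [h] <;> norm_num
  have hp' : (11 : ℤ) ≤ (p : ℤ) := by exact_mod_cast hp
  have htri : ∀ z : ZMod p, χ z = 0 ∨ χ z = 1 ∨ χ z = -1 := by
    intro z
    by_cases hz : z = 0
    · left; rw [hz]; exact quadraticChar_zero
    · right; exact quadraticChar_dichotomy hz
  have hsum_ge : (p : ℤ) - 1 ≤ ∑ s : ZMod p, F s := by
    rw [hsum]
    rcases htri α with h₁ | h₁ | h₁ <;> rcases htri β with h₂ | h₂ | h₂ <;>
      rcases htri (-1 : ZMod p) with h₃ | h₃ | h₃ <;>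
      rw [h₁, h₂, h₃] <;> norm_num <;> linarith
  set T : Finset (ZMod p) := (univ.erase (0 : ZMod p)).erase y with hT
  have hyne : y ∈ univ.erase (0 : ZMod p) := by simp [hy0]
  have hsum_T : ∑ s ∈ T, F s = (∑ s : ZMod p, F s) - F y - F 0 := by
    have e0 : ∑ s : ZMod p, F s = F 0 + ∑ s ∈ univ.erase (0 : ZMod p), F s :=
      (Finset.add_sum_erase _ F (Finset.mem_univ 0)).symm
    have e1 : ∑ s ∈ univ.erase (0 : ZMod p), F s = F y + ∑ s ∈ T, F s :=
      (Finset.add_sum_erase _ F hyne).symm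
    rw [e0, e1]; ring
  have hF0 : F 0 ≤ 2 := by
    have := (hbound ((y - 0) * β)).2
    simp only [hF, zero_mul, quadraticChar_zero, hχdef] at *
    nlinarith [this]
  have hFy : F y ≤ 2 := by
    have := (hbound (y * α)).2
    simp only [hF, sub_self, zero_mul, quadraticChar_zero, hχdef] at *
    nlinarith [this]
  set P : ZMod p → Prop := fun s => χ (s * α) = 1 ∧ χ ((y - s) * β) = 1 with hP
  set S : Finset (ZMod p) := T.filter P with hS
  have hFT : ∀ s ∈ T, F s = if P s then 4 else 0 := by
    intro s hs
    rw [hT, Finset.mem_erase, Finset.mem_erase] at hs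
    have hs0 : s ≠ 0 := hs.2.1
    have hsy : s ≠ y := hs.1
    have hA : s * α ≠ 0 := mul_ne_zero hs0 hα0
    have hB : (y - s) * β ≠ 0 := mul_ne_zero (sub_ne_zero.mpr (Ne.symm hsy)) hβ0
    rcases quadraticChar_dichotomy hA with hA1 | hA1 <;>
      rcases quadraticChar_dichotomy hB with hB1 | hB1 <;>
      · show (1 + χ (s * α)) * (1 + χ ((y - s) * β)) = if P s then 4 else 0
        rw [← hχdef] at hA1 hB1
        simp only [hP, hA1, hB1]
        norm_num
  have hcard : (p : ℤ) - 5 ≤ 4 * (S.card : ℤ) := by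
    have : ∑ s ∈ T, F s = 4 * (S.card : ℤ) := by
      rw [Finset.sum_congr rfl hFT, Finset.sum_ite, Finset.sum_const, Finset.sum_const]
      simp [hS, mul_comm]
    rw [← this, hsum_T]
    linarith
  have hScard : 1 < S.card := by
    by_contra hc
    push_neg at hc
    have : (S.card : ℤ) ≤ 1 := by exact_mod_cast hc
    linarith
  obtain ⟨s₁, hs₁, s₂, hs₂, hne⟩ := Finset.one_lt_card.mp hScard
  -- at most one s ∈ S can have c₁ + c₂ + c₃ = 0
  have hgood : ∃ s ∈ S, s * α + (y - s) * β + 1 ≠ 0 := by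
    by_contra hc
    push_neg at hc
    have e1 := hc s₁ hs₁
    have e2 := hc s₂ hs₂
    have : (s₁ - s₂) * (α - β) = 0 := by
      have := sub_eq_zero.mpr (e1.trans e2.symm)
      ring_nf at this ⊢
      linear_combination this
    rcases mul_eq_zero.mp this with h | h
    · exact hne (sub_eq_zero.mp h)
    · have : α = β := sub_eq_zero.mp h
      exact h12 (by rw [← inv_inv x₁, ← inv_inv x₂, ← hα, ← hβ, this])
  obtain ⟨s, hsS, hgs⟩ := hgood
  obtain ⟨hP1, hP2⟩ := (Finset.mem_filter.mp hsS).2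
  refine ⟨s * α, (hQpIff _).mpr hP1, (y - s) * β, (hQpIff _).mpr hP2, 1, ⟨1, by simp⟩, ?_, ?_⟩
  · have e : s * α * x₁ = s := by rw [hα]; field_simp
    have e2 : (y - s) * β * x₂ = y - s := by rw [hβ]; field_simp
    rw [e, e2, hy]; ring
  · simpa using hgs
end

section
/- For every odd prime p, every sequence (a_1,...,a_{p+4}) in Z_p of length p+4 has a subsequence of length exactly p which is a (Q_p,1)-weighted zero-sum sequence. (Hence E_{Q_p,1} ≤ p+4.) -/
open MvPolynomial Finset

theorem stmt_16 (p : ℕ) [Fact p.Prime] (hp : Odd p) (a : Fin (p + 4) → ZMod p) :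
    ∃ s : Finset (Fin (p + 4)), s.card = p ∧
      ∃ c : Fin (p + 4) → ZMod p, (∀ i ∈ s, c i ∈ Qp p) ∧
        ∑ i ∈ s, c i * a i = 0 ∧ ∑ i ∈ s, c i = 0 := by
  have hprime := (Fact.out : p.Prime)
  rcases le_or_gt p 5 with hle | hgt
  · -- small case: EGZ
    have h2 : 2 * p - 1 ≤ (Finset.univ : Finset (Fin (p+4))).card := by
      simp [Finset.card_univ]; omega
    obtain ⟨t, -, htcard, htsum⟩ := ZMod.erdos_ginzburg_ziv a h2
    refine ⟨t, htcard, fun _ => 1, fun i _ => ⟨1, by simp⟩, by simpa using htsum, ?_⟩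
    simp [htcard]
  · -- Chevalley–Warning case, p ≥ 7
    let f₀ : MvPolynomial (Fin (p+4)) (ZMod p) := ∑ i, C (a i) * X i ^ 2
    let f₁ : MvPolynomial (Fin (p+4)) (ZMod p) := ∑ i, X i ^ 2
    let f₂ : MvPolynomial (Fin (p+4)) (ZMod p) := ∑ i, X i ^ (p-1)
    let f : Fin 3 → MvPolynomial (Fin (p+4)) (ZMod p) := ![f₀, f₁, f₂]
    have hXd : ∀ (i : Fin (p+4)) (n : ℕ), ((X i : MvPolynomial (Fin (p+4)) (ZMod p)) ^ n).totalDegree ≤ n :=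
      fun i n => (totalDegree_pow _ _).trans (by simp [totalDegree_X])
    have h0 : f₀.totalDegree ≤ 2 := by
      refine (totalDegree_finset_sum _ _).trans (Finset.sup_le fun i _ => ?_)
      refine (totalDegree_mul _ _).trans ?_
      rw [totalDegree_C]
      simpa using hXd i 2
    have h1 : f₁.totalDegree ≤ 2 := by
      refine (totalDegree_finset_sum _ _).trans (Finset.sup_le fun i _ => hXd i 2)
    have h2 : f₂.totalDegree ≤ p - 1 := by
      refine (totalDegree_finset_sum _ _).trans (Finset.sup_le fun i _ => hXd i (p-1))
    have hdeg : ∑ j, (f j).totalDegree < Fintype.card (Fin (p+4)) := by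
      have : ∑ j, (f j).totalDegree = f₀.totalDegree + f₁.totalDegree + f₂.totalDegree := by
        rw [Fin.sum_univ_three]; rfl
      rw [this, Fintype.card_fin]
      omega
    have hdvd := char_dvd_card_solutions_of_fintype_sum_lt p hdeg
    have hp1 : p - 1 ≠ 0 := Nat.sub_ne_zero_of_lt hprime.one_lt
    have h0sol : ∀ j, eval (0 : Fin (p+4) → ZMod p) (f j) = 0 := by
      intro j
      fin_cases j <;>
        simp [f, f₀, f₁, f₂, eval_sum, zero_pow, hp1]
    have hdvd' : p ∣ Fintype.card { x : Fin (p+4) → ZMod p // ∀ j, eval x (f j) = 0 } := by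
      convert hdvd using 2
    rw [← Nat.card_eq_fintype_card] at hdvd'
    have hne : Nonempty { x : Fin (p+4) → ZMod p // ∀ j, eval x (f j) = 0 } := ⟨⟨0, h0sol⟩⟩
    have hpos : 0 < Nat.card { x : Fin (p+4) → ZMod p // ∀ j, eval x (f j) = 0 } :=
      Nat.card_pos
    have hcard1' : 1 < Nat.card { x : Fin (p+4) → ZMod p // ∀ j, eval x (f j) = 0 } := by
      obtain ⟨k, hk⟩ := hdvd'
      have hk0 : k ≠ 0 := by
        rintro rfl
        rw [Nat.mul_zero] at hk
        omega
      calc 1 < p := by omega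
        _ ≤ p * k := Nat.le_mul_of_pos_right p (Nat.pos_of_ne_zero hk0)
        _ = _ := hk.symm
    have hcard1 : 1 < Fintype.card { x : Fin (p+4) → ZMod p // ∀ j, eval x (f j) = 0 } := by
      rwa [Nat.card_eq_fintype_card] at hcard1'
    obtain ⟨y, hy⟩ := Fintype.exists_ne_of_one_lt_card hcard1 ⟨0, h0sol⟩
    obtain ⟨x, hx⟩ := y
    have hxne : x ≠ 0 := by intro h; apply hy; subst h; rfl
    have hx0 : eval x f₀ = 0 := hx 0
    have hx1 : eval x f₁ = 0 := hx 1
    have hx2 : eval x f₂ = 0 := hx 2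
    set s : Finset (Fin (p+4)) := Finset.univ.filter (fun i => x i ≠ 0) with hs
    have hmem : ∀ i, i ∈ s ↔ x i ≠ 0 := by intro i; simp [hs]
    have hzero : ∀ i, i ∉ s → x i = 0 := by
      intro i hi
      by_contra h
      exact hi ((hmem i).mpr h)
    have hsum3 : (s.card : ZMod p) = 0 := by
      rw [← hx2]
      simp only [f₂, eval_sum, eval_pow, eval_X]
      rw [Finset.card_eq_sum_ones s, Nat.cast_sum]
      rw [← Finset.sum_subset (Finset.subset_univ s)
        (fun i _ hi => by rw [hzero i hi, zero_pow hp1])]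
      exact Finset.sum_congr rfl fun i hi => by
        rw [ZMod.pow_card_sub_one_eq_one ((hmem i).mp hi)]; simp
    have hpd : p ∣ s.card := (ZMod.natCast_eq_zero_iff _ _).mp hsum3
    have hspos : 0 < s.card := by
      rw [Finset.card_pos]
      obtain ⟨i, hi⟩ := Function.ne_iff.mp hxne
      exact ⟨i, (hmem i).mpr hi⟩
    have hsle : s.card ≤ p + 4 := by
      have := Finset.card_le_card (Finset.subset_univ s)
      simpa using this
    have hscard : s.card = p := by
      obtain ⟨k, hk⟩ := hpd
      have hk1 : k = 1 := by
        have ha1 : 1 ≤ k := by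
          rcases Nat.eq_zero_or_pos k with h | h
          · subst h; rw [Nat.mul_zero] at hk; omega
          · exact h
        have ha2 : k < 2 := by
          by_contra h
          push_neg at h
          have h2 : p * 2 ≤ p * k := Nat.mul_le_mul_left p h
          omega
        omega
      rw [hk, hk1, Nat.mul_one]
    refine ⟨s, hscard, fun i => x i ^ 2, fun i hi => ?_, ?_, ?_⟩
    · exact ⟨Units.mk0 (x i) ((hmem i).mp hi), rfl⟩
    · rw [← hx0]
      simp only [f₀, eval_sum, eval_mul, eval_C, eval_pow, eval_X]
      rw [← Finset.sum_subset (Finset.subset_univ s)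
        (fun i _ hi => by rw [hzero i hi]; ring)]
      exact Finset.sum_congr rfl fun i _ => by ring
    · rw [← hx1]
      simp only [f₁, eval_sum, eval_pow, eval_X]
      exact Finset.sum_subset (Finset.subset_univ s)
        (fun i _ hi => by rw [hzero i hi]; ring)
end

section
/- For every odd prime p, every sequence (a_1,...,a_5) of length five in Z_p has a nonempty subsequence which is a (Q_p,1)-weighted zero-sum sequence. (Hence D_{Q_p,1} ≤ 5.) -/
open MvPolynomial in
theorem stmt_17 (p : ℕ) [Fact p.Prime] (hp : Odd p) (a : Fin 5 → ZMod p) :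
    ∃ s : Finset (Fin 5), s.Nonempty ∧
      ∃ c : Fin 5 → ZMod p, (∀ i ∈ s, c i ∈ Qp p) ∧
        ∑ i ∈ s, c i * a i = 0 ∧ ∑ i ∈ s, c i = 0 := by
  set f₁ : MvPolynomial (Fin 5) (ZMod p) := ∑ i, C (a i) * X i ^ 2 with hf₁
  set f₂ : MvPolynomial (Fin 5) (ZMod p) := ∑ i, X i ^ 2 with hf₂
  have hd₁ : f₁.totalDegree ≤ 2 := by
    refine (totalDegree_finset_sum _ _).trans (Finset.sup_le fun i _ => ?_)
    calc (C (a i) * X i ^ 2).totalDegree ≤ (C (a i)).totalDegree + (X i ^ 2).totalDegree :=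
          totalDegree_mul _ _
      _ ≤ 0 + 2 := by
          gcongr
          · exact le_of_eq (totalDegree_C _)
          · exact totalDegree_pow _ _ |>.trans (by simp [totalDegree_X])
      _ = 2 := by norm_num
  have hd₂ : f₂.totalDegree ≤ 2 := by
    refine (totalDegree_finset_sum _ _).trans (Finset.sup_le fun i _ => ?_)
    exact totalDegree_pow _ _ |>.trans (by simp [totalDegree_X])
  have hlt : f₁.totalDegree + f₂.totalDegree < Fintype.card (Fin 5) := by
    simp only [Fintype.card_fin]; omega
  have hdvd := char_dvd_card_solutions_of_add_lt p hlt
  -- zero is a solution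
  have h0 : (eval (0 : Fin 5 → ZMod p) f₁ = 0 ∧ eval (0 : Fin 5 → ZMod p) f₂ = 0) := by
    constructor <;> simp [hf₁, hf₂]
  have hcard : 1 < Fintype.card {x : Fin 5 → ZMod p // eval x f₁ = 0 ∧ eval x f₂ = 0} := by
    have hpos : 0 < Fintype.card {x : Fin 5 → ZMod p // eval x f₁ = 0 ∧ eval x f₂ = 0} :=
      Fintype.card_pos_iff.mpr ⟨⟨0, h0⟩⟩
    have hp2 : 2 ≤ p := (Fact.out : p.Prime).two_le
    have := Nat.le_of_dvd hpos hdvd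
    omega
  obtain ⟨x, hx⟩ := Fintype.exists_ne_of_one_lt_card hcard ⟨0, h0⟩
  have hxne : x.1 ≠ 0 := fun h => hx (Subtype.ext h)
  have hex : ∃ y : Fin 5 → ZMod p, y ≠ 0 ∧ eval y f₁ = 0 ∧ eval y f₂ = 0 :=
    ⟨x.1, hxne, x.2⟩
  clear hx hxne hdvd hcard h0 x
  obtain ⟨y, hyne, hy1, hy2⟩ := hex
  rw [hf₁] at hy1
  rw [hf₂] at hy2
  simp only [eval_sum, eval_mul, eval_C, eval_pow, eval_X] at hy1 hy2
  obtain ⟨j, hj⟩ := Function.ne_iff.mp hyne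
  refine ⟨Finset.univ.filter (fun i => y i ≠ 0), ⟨j, by simpa using hj⟩,
    fun i => y i ^ 2, ?_, ?_, ?_⟩
  · intro i hi
    simp only [Finset.mem_filter] at hi
    obtain ⟨u, hu⟩ := IsUnit (y i) |> fun _ => isUnit_iff_ne_zero.mpr hi.2
    exact ⟨u, by rw [hu]⟩
  · calc ∑ i ∈ Finset.univ.filter (fun i => y i ≠ 0), y i ^ 2 * a i
        = ∑ i, y i ^ 2 * a i := by
          refine Finset.sum_subset (Finset.filter_subset _ _) fun i _ hi => ?_
          simp only [Finset.mem_filter, Finset.mem_univ, true_and, not_not] at hi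
          simp [hi]
      _ = 0 := by rw [← hy1]; exact Finset.sum_congr rfl fun i _ => by ring
  · calc ∑ i ∈ Finset.univ.filter (fun i => y i ≠ 0), y i ^ 2
        = ∑ i, y i ^ 2 := by
          refine Finset.sum_subset (Finset.filter_subset _ _) fun i _ hi => ?_
          simp only [Finset.mem_filter, Finset.mem_univ, true_and, not_not] at hi
          simp [hi]
      _ = 0 := hy2
end
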